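/- arXiv:2005.00240 — 3 statements merged into one kernel-verified Lean document; each statement's English description precedes it below -/
import Mathlib

section
/- Let X_2, X_3, ... and Y_2, Y_3, ... be mutually independent random variables with E[X_k] = E[Y_k] = 0, E[X_k^2] = E[Y_k^2] = 1 and |X_k| ≤ M almost surely, where Y_n takes the values N_n, 0, −N_n with probabilities p_n := 1/(2N_n^2), 1 − 2p_n, p_n respectively, and N_n ≥ 1. Form the triangular array X_{1,n} := Y_n/√n, X_{k,n} := X_k/√n (2 ≤ k ≤ n), with zero boundary g_{k,n} ≡ 0, S_{k,n} := X_{1,n}+...+X_{k,n}, T_n := inf{k ≥ 1 : S_{k,n} ≤ 0}, and E_n := E[S_{n,n}; T_n > n]. If N_n > (n−1)M for all n, then the array satisfies the Lindeberg condition, the events {T_n > n} and {Y_n = N_n} coincide, E_n = P(Y_n = N_n) · N_n/√n, and P(T_n > n) = o(E_n) as n → ∞. -/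
/-!
From `E X₂² = 1` and `|X₂| ≤ M` we get `M ≥ 1`, hence `N_n > (n - 1) M ≥ 1`. Since
`|X₂ + ⋯ + X_k| ≤ (n - 1) M < N_n`, a walk whose first step is `Y_n = N_n` stays positive up to
time `n`, while the first steps `0` and `-N_n` stop it at once: `{T_n > n} = {Y_n = N_n}`.
On that event `S_{n,n} = (N_n + X₂ + ⋯ + X_n)/√n`, and the `X_k` are centred and independent of
`Y_n`, so `E_n = p_n N_n/√n` and `P(T_n > n)/E_n = √n/N_n → 0`. For the Lindeberg sums, the
bounded `X_k/√n` drop out once `ε√n ≥ M`, and the first term is at most `E[Y_n²]/n = 1/n`.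
-/

open MeasureTheory ProbabilityTheory Filter

noncomputable section

/-- Partial sums `S_k = X_1 + … + X_k`. -/
def psum {Ω : Type*} (X : ℕ → Ω → ℝ) (k : ℕ) (ω : Ω) : ℝ :=
  ∑ i ∈ Finset.Icc 1 k, X i ω

/-- First crossing time `T = inf {k : 1 ≤ k ≤ n, S_k ≤ g_k}`, with the value `n + 1`
if no crossing occurs up to time `n`. -/
def fpt {Ω : Type*} (n : ℕ) (S : ℕ → Ω → ℝ) (g : ℕ → ℝ) (ω : Ω) : ℕ :=
  sInf ({k | 1 ≤ k ∧ k ≤ n ∧ S k ω ≤ g k} ∪ {n + 1})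

/-- The triangular array of Example 1: `X_{1,n} = Y_n/√n` and `X_{k,n} = X_k/√n`
for `2 ≤ k ≤ n`. -/
def exRow {Ω : Type*} (X Y : ℕ → Ω → ℝ) (n i : ℕ) (ω : Ω) : ℝ :=
  if i = 1 then Y n ω / Real.sqrt n else X i ω / Real.sqrt n

section General

variable {Ω : Type*} {mΩ : MeasurableSpace Ω} {μ : Measure Ω}

theorem ae_mem_of_sum_measure_preimage_singleton_eq_one [IsProbabilityMeasure μ] {Y : Ω → ℝ}
    (hY : Measurable Y) {s : Finset ℝ} (h : ∑ x ∈ s, μ (Y ⁻¹' {x}) = 1) :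
    ∀ᵐ ω ∂μ, Y ω ∈ s := by
  rw [sum_measure_preimage_singleton s fun y _ => hY (measurableSet_singleton y)] at h
  exact ae_iff.2 ((prob_compl_eq_zero_iff (hY s.measurableSet)).2 h)

theorem ae_eq_or_eq_neg_or_eq_zero_of_threePoint [IsProbabilityMeasure μ] {Y : Ω → ℝ} {N : ℝ}
    (hY : Measurable Y) (hN : 1 ≤ N)
    (hYlaw : μ {ω | Y ω = N} = ENNReal.ofReal (1 / (2 * N ^ 2)) ∧
      μ {ω | Y ω = -N} = ENNReal.ofReal (1 / (2 * N ^ 2)) ∧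
      μ {ω | Y ω = 0} = ENNReal.ofReal (1 - 1 / N ^ 2)) :
    ∀ᵐ ω ∂μ, Y ω = N ∨ Y ω = -N ∨ Y ω = 0 := by
  obtain ⟨hpos, hneg, hzero⟩ := hYlaw
  have hinv : 1 / N ^ 2 ≤ 1 := by rw [div_le_one (by positivity)]; nlinarith
  have hsum : ∑ x ∈ {N, -N, 0}, μ (Y ⁻¹' {x}) = 1 := by
    rw [Finset.sum_insert (by grind), Finset.sum_pair (by linarith)]
    change μ {ω | Y ω = N} + (μ {ω | Y ω = -N} + μ {ω | Y ω = 0}) = 1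
    rw [hpos, hneg, hzero, ← ENNReal.ofReal_add (by positivity) (by linarith),
      ← ENNReal.ofReal_add (by positivity) (by positivity), ← ENNReal.ofReal_one]
    congr 1
    field_simp
    ring
  simpa using ae_mem_of_sum_measure_preimage_singleton_eq_one hY hsum

theorem one_le_of_integral_sq_eq_one [IsProbabilityMeasure μ] {X : Ω → ℝ} {M : ℝ}
    (hX : ∀ᵐ ω ∂μ, |X ω| ≤ M) (hvar : ∫ ω, X ω ^ 2 ∂μ = 1) : 1 ≤ M := by
  obtain ⟨ω, hω⟩ := hX.exists
  have hM : 0 ≤ M := (abs_nonneg _).trans hω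
  have hsq : ∫ ω, X ω ^ 2 ∂μ ≤ ∫ _, M ^ 2 ∂μ :=
    integral_mono_of_nonneg (ae_of_all _ fun ω => sq_nonneg (X ω)) (integrable_const _)
      (hX.mono fun ω h => by simpa only [sq_abs] using pow_le_pow_left₀ (abs_nonneg _) h 2)
  rw [hvar, integral_const, probReal_univ, one_smul] at hsq
  nlinarith

theorem setIntegral_sq_eq_zero_of_abs_le {f : Ω → ℝ} {ε : ℝ} (hf : ∀ᵐ ω ∂μ, |f ω| ≤ ε) :
    ∫ ω in {ω | ε < |f ω|}, f ω ^ 2 ∂μ = 0 := by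
  have hnull : μ {ω | ε < |f ω|} = 0 := by simpa only [ae_iff, not_le] using hf
  rw [Measure.restrict_eq_zero.2 hnull, integral_zero_measure]

theorem ProbabilityTheory.IndepFun.setIntegral_preimage_eq_mul {X Y : Ω → ℝ} (h : IndepFun X Y μ)
    (hX : AEMeasurable X μ) (hY : Measurable Y) {s : Set ℝ} (hs : MeasurableSet s) :
    ∫ ω in Y ⁻¹' s, X ω ∂μ = μ.real (Y ⁻¹' s) * ∫ ω, X ω ∂μ :=
  Indep.setIntegral_eq_mul (f := id) hY.comap_le ((IndepFun_iff_Indep _ _ _).1 h.symm) hX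
    ⟨s, hs, rfl⟩ aestronglyMeasurable_id

end General

theorem lt_fpt_iff {Ω : Type*} {n : ℕ} {S : ℕ → Ω → ℝ} {g : ℕ → ℝ} {ω : Ω} :
    n < fpt n S g ω ↔ ∀ k, 1 ≤ k → k ≤ n → g k < S k ω := by
  unfold fpt
  constructor
  · intro h k hk1 hkn
    by_contra hc
    have := Nat.sInf_le (Set.mem_union_left {n + 1}
      (show k ∈ {k | 1 ≤ k ∧ k ≤ n ∧ S k ω ≤ g k} from ⟨hk1, hkn, not_lt.1 hc⟩))
    omega
  · intro hpos
    have hempty : {k | 1 ≤ k ∧ k ≤ n ∧ S k ω ≤ g k} = ∅ :=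
      Set.eq_empty_of_forall_notMem fun k ⟨hk1, hkn, hle⟩ => (hpos k hk1 hkn).not_ge hle
    rw [hempty, Set.empty_union, csInf_singleton]
    omega

theorem psum_exRow {Ω : Type*} (X Y : ℕ → Ω → ℝ) (n : ℕ) {k : ℕ} (hk : 1 ≤ k) (ω : Ω) :
    psum (exRow X Y n) k ω = (Y n ω + ∑ i ∈ Finset.Icc 2 k, X i ω) / Real.sqrt n := by
  rw [psum, ← Finset.insert_Icc_add_one_left_eq_Icc hk, Finset.sum_insert (by simp), add_div,
    Finset.sum_div]
  congr 1
  refine Finset.sum_congr rfl fun i hi => ?_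
  rw [exRow, if_neg (by rw [Finset.mem_Icc] at hi; omega)]

section Example

variable {Ω : Type*} {X Y : ℕ → Ω → ℝ} {M N : ℝ} {n : ℕ}

theorem neg_mul_le_sum_Icc_two {ω : Ω} {k : ℕ} (hk : 1 ≤ k) (hkn : k ≤ n) (hM : 0 ≤ M)
    (hX : ∀ i ∈ Finset.Icc 2 n, |X i ω| ≤ M) :
    -(((n : ℝ) - 1) * M) ≤ ∑ i ∈ Finset.Icc 2 k, X i ω := by
  have hcard : ((Finset.Icc 2 k).card : ℝ) ≤ (n : ℝ) - 1 := by
    have : (Finset.Icc 2 k).card + 1 ≤ n := by rw [Nat.card_Icc]; omega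
    have : ((Finset.Icc 2 k).card : ℝ) + 1 ≤ n := by exact_mod_cast this
    linarith
  calc -(((n : ℝ) - 1) * M) ≤ -((Finset.Icc 2 k).card * M) := by gcongr
    _ = ∑ i ∈ Finset.Icc 2 k, -M := by simp
    _ ≤ ∑ i ∈ Finset.Icc 2 k, X i ω := Finset.sum_le_sum fun i hi =>
        neg_le_of_abs_le (hX i (Finset.Icc_subset_Icc_right hkn hi))

theorem lt_fpt_exRow_iff {ω : Ω} (hn : 1 ≤ n) (hM : 0 ≤ M) (hNM : ((n : ℝ) - 1) * M < N)
    (hX : ∀ i ∈ Finset.Icc 2 n, |X i ω| ≤ M) (hY : Y n ω = N ∨ Y n ω = -N ∨ Y n ω = 0) :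
    n < fpt n (psum (exRow X Y n)) (fun _ => 0) ω ↔ Y n ω = N := by
  have hsqrt : 0 < Real.sqrt n := Real.sqrt_pos.2 (by exact_mod_cast hn)
  have hN : 0 < N := lt_of_le_of_lt (mul_nonneg (by simp [hn]) hM) hNM
  rw [lt_fpt_iff]
  constructor
  · intro hpos
    have hS1 := hpos 1 le_rfl hn
    rw [psum_exRow X Y n le_rfl, Finset.Icc_eq_empty (by norm_num), Finset.sum_empty, add_zero,
      div_pos_iff_of_pos_right hsqrt] at hS1
    rcases hY with hY | hY | hY <;> rw [hY] at hS1 ⊢ <;> linarith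
  · intro hY k hk hkn
    rw [psum_exRow X Y n hk, hY]
    have := neg_mul_le_sum_Icc_two hk hkn hM hX
    exact div_pos (by linarith) hsqrt

theorem fpt_exRow_event_ae_eq {_ : MeasurableSpace Ω} {μ : Measure Ω} (hn : 1 ≤ n) (hM : 0 ≤ M)
    (hNM : ((n : ℝ) - 1) * M < N) (hX : ∀ k, 2 ≤ k → ∀ᵐ ω ∂μ, |X k ω| ≤ M)
    (hY : ∀ᵐ ω ∂μ, Y n ω = N ∨ Y n ω = -N ∨ Y n ω = 0) :
    {ω | n < fpt n (psum (exRow X Y n)) (fun _ => 0) ω} =ᵐ[μ] {ω | Y n ω = N} := by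
  have hXn : ∀ᵐ ω ∂μ, ∀ k ∈ Finset.Icc 2 n, |X k ω| ≤ M :=
    (eventually_all_finset _).2 fun k hk => hX k (Finset.mem_Icc.1 hk).1
  filter_upwards [hXn, hY] with ω hXω hYω
  exact propext (lt_fpt_exRow_iff hn hM hNM hXω hYω)

theorem setIntegral_psum_exRow {_ : MeasurableSpace Ω} {μ : Measure Ω} [IsFiniteMeasure μ]
    (hn : 1 ≤ n) (hY : Measurable (Y n)) (hXint : ∀ k, 2 ≤ k → Integrable (X k) μ)
    (hind : ∀ k, 2 ≤ k → IndepFun (X k) (Y n) μ) (hmean : ∀ k, 2 ≤ k → ∫ ω, X k ω ∂μ = 0) :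
    ∫ ω in {ω | Y n ω = N}, psum (exRow X Y n) n ω ∂μ
      = μ.real {ω | Y n ω = N} * N / Real.sqrt n := by
  have hA : MeasurableSet {ω | Y n ω = N} := hY (measurableSet_singleton N)
  have hXA : ∀ k, 2 ≤ k → ∫ ω in {ω | Y n ω = N}, X k ω ∂μ = 0 := fun k hk => by
    have := (hind k hk).setIntegral_preimage_eq_mul (hXint k hk).aemeasurable hY
      (measurableSet_singleton N)
    rwa [hmean k hk, mul_zero] at this
  calc ∫ ω in {ω | Y n ω = N}, psum (exRow X Y n) n ω ∂μ
      = ∫ ω in {ω | Y n ω = N}, (N + ∑ i ∈ Finset.Icc 2 n, X i ω) / Real.sqrt n ∂μ :=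
        setIntegral_congr_fun hA fun ω hω => by rw [psum_exRow X Y n hn, show Y n ω = N from hω]
    _ = ((∫ ω in {ω | Y n ω = N}, N ∂μ)
          + ∑ i ∈ Finset.Icc 2 n, ∫ ω in {ω | Y n ω = N}, X i ω ∂μ) / Real.sqrt n := by
        rw [integral_div, integral_add (integrable_const _),
          integral_finsetSum _ fun i hi => (hXint i (Finset.mem_Icc.1 hi).1).integrableOn]
        exact integrable_finsetSum _ fun i hi => (hXint i (Finset.mem_Icc.1 hi).1).integrableOn
    _ = μ.real {ω | Y n ω = N} * N / Real.sqrt n := by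
        rw [Finset.sum_eq_zero fun i hi => hXA i (Finset.mem_Icc.1 hi).1, add_zero,
          setIntegral_const, smul_eq_mul]

theorem lindebergSum_exRow_le {_ : MeasurableSpace Ω} {μ : Measure Ω} {ε : ℝ} (hn : 1 ≤ n)
    (hMε : M ≤ ε * Real.sqrt n) (hX : ∀ k, 2 ≤ k → ∀ᵐ ω ∂μ, |X k ω| ≤ M)
    (hvarY : ∫ ω, Y n ω ^ 2 ∂μ = 1) :
    ∑ i ∈ Finset.Icc 1 n, ∫ ω in {ω | ε < |exRow X Y n i ω|}, exRow X Y n i ω ^ 2 ∂μ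
      ≤ 1 / n := by
  have hsqrt : 0 < Real.sqrt n := Real.sqrt_pos.2 (by exact_mod_cast hn)
  have hsmall : ∀ i ∈ Finset.Icc 2 n,
      ∫ ω in {ω | ε < |exRow X Y n i ω|}, exRow X Y n i ω ^ 2 ∂μ = 0 := fun i hi => by
    have hi2 := (Finset.mem_Icc.1 hi).1
    refine setIntegral_sq_eq_zero_of_abs_le ((hX i hi2).mono fun ω hω => ?_)
    rw [exRow, if_neg (by omega), abs_div, abs_of_pos hsqrt, div_le_iff₀ hsqrt]
    linarith
  have hrow1 : exRow X Y n 1 = fun ω => Y n ω / Real.sqrt n := funext fun ω => if_pos rfl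
  -- `∫ Y_n² = 1 ≠ 0` already forces `Y_n²` to be integrable.
  have hint : Integrable (fun ω => (Y n ω / Real.sqrt n) ^ 2) μ := by
    simp only [div_pow]
    exact (Integrable.of_integral_ne_zero (hvarY ▸ one_ne_zero)).div_const _
  rw [← Finset.insert_Icc_add_one_left_eq_Icc hn, Finset.sum_insert (by simp), one_add_one_eq_two,
    Finset.sum_eq_zero hsmall, add_zero, hrow1]
  calc ∫ ω in {ω | ε < |Y n ω / Real.sqrt n|}, (Y n ω / Real.sqrt n) ^ 2 ∂μ
      ≤ ∫ ω, (Y n ω / Real.sqrt n) ^ 2 ∂μ :=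
        setIntegral_le_integral hint (ae_of_all _ fun ω => sq_nonneg _)
    _ = 1 / n := by
        simp only [div_pow, Real.sq_sqrt (Nat.cast_nonneg n)]
        rw [integral_div, hvarY]

theorem tendsto_lindebergSum_exRow {_ : MeasurableSpace Ω} {μ : Measure Ω} {ε : ℝ} (hε : 0 < ε)
    (hX : ∀ k, 2 ≤ k → ∀ᵐ ω ∂μ, |X k ω| ≤ M) (hvarY : ∀ n, 2 ≤ n → ∫ ω, Y n ω ^ 2 ∂μ = 1) :
    Tendsto (fun n => ∑ i ∈ Finset.Icc 1 n,
        ∫ ω in {ω | ε < |exRow X Y n i ω|}, exRow X Y n i ω ^ 2 ∂μ) atTop (nhds 0) := by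
  have hgrow : Tendsto (fun n : ℕ => ε * Real.sqrt n) atTop atTop :=
    (Real.tendsto_sqrt_atTop.comp tendsto_natCast_atTop_atTop).const_mul_atTop hε
  refine squeeze_zero' (Eventually.of_forall fun n =>
      Finset.sum_nonneg fun i _ => integral_nonneg fun ω => sq_nonneg _) ?_
    tendsto_one_div_atTop_nhds_zero_nat
  filter_upwards [eventually_ge_atTop 2, hgrow.eventually_ge_atTop M] with n hn hMε
  exact lindebergSum_exRow_le (by omega) hMε hX (hvarY n hn)

theorem tendsto_sqrt_div_of_mul_lt {Nn : ℕ → ℝ} (hM : 1 ≤ M)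
    (hNM : ∀ n : ℕ, 2 ≤ n → ((n : ℝ) - 1) * M < Nn n) :
    Tendsto (fun n : ℕ => Real.sqrt n / Nn n) atTop (nhds 0) := by
  have hbound : ∀ᶠ n : ℕ in atTop,
      0 ≤ Real.sqrt n / Nn n ∧ Real.sqrt n / Nn n ≤ 2 / Real.sqrt n := by
    filter_upwards [eventually_ge_atTop 2] with n hn
    have hn' : (2 : ℝ) ≤ n := by exact_mod_cast hn
    have hN : (n : ℝ) - 1 < Nn n := by nlinarith [hNM n hn]
    have hsqrt : 0 < Real.sqrt n := Real.sqrt_pos.2 (by linarith)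
    refine ⟨div_nonneg hsqrt.le (by linarith), ?_⟩
    rw [div_le_div_iff₀ (by linarith) hsqrt, Real.mul_self_sqrt (by linarith)]
    linarith
  exact squeeze_zero' (hbound.mono fun _ h => h.1) (hbound.mono fun _ h => h.2)
    (tendsto_const_nhds.div_atTop (Real.tendsto_sqrt_atTop.comp tendsto_natCast_atTop_atTop))

end Example

theorem stmt_7_general {Ω : Type*} [MeasureSpace Ω] [IsProbabilityMeasure (ℙ : Measure Ω)]
    (X Y : ℕ → Ω → ℝ) (M : ℝ) (Nn : ℕ → ℝ)
    (hmeas : ∀ k, Measurable (X k)) (hmeasY : ∀ k, Measurable (Y k))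
    (hind : iIndepFun (Sum.elim X Y) ℙ)
    (hmean : ∀ k, 2 ≤ k → ∫ ω, X k ω = 0)
    (hvar : ∀ k, 2 ≤ k → ∫ ω, (X k ω) ^ 2 = 1)
    (hbdd : ∀ k, 2 ≤ k → ∀ᵐ ω ∂ℙ, |X k ω| ≤ M)
    (hvarY : ∀ n, 2 ≤ n → ∫ ω, (Y n ω) ^ 2 = 1)
    (hYlaw : ∀ n, 2 ≤ n →
      ℙ {ω | Y n ω = Nn n} = ENNReal.ofReal (1 / (2 * (Nn n) ^ 2)) ∧
      ℙ {ω | Y n ω = -Nn n} = ENNReal.ofReal (1 / (2 * (Nn n) ^ 2)) ∧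
      ℙ {ω | Y n ω = 0} = ENNReal.ofReal (1 - 1 / (Nn n) ^ 2))
    (hNM : ∀ n : ℕ, 2 ≤ n → ((n : ℝ) - 1) * M < Nn n) :
    (∀ ε : ℝ, 0 < ε →
      Tendsto (fun n => ∑ i ∈ Finset.Icc 1 n,
          ∫ ω in {ω | ε < |exRow X Y n i ω|}, (exRow X Y n i ω) ^ 2)
        atTop (nhds 0))
    ∧ (∀ n, 2 ≤ n →
        {ω | n < fpt n (psum (exRow X Y n)) (fun _ => 0) ω} =ᵐ[ℙ]
          {ω | Y n ω = Nn n})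
    ∧ (∀ n, 2 ≤ n →
        (∫ ω in {ω | n < fpt n (psum (exRow X Y n)) (fun _ => 0) ω},
            psum (exRow X Y n) n ω)
          = (ℙ {ω | Y n ω = Nn n}).toReal * Nn n / Real.sqrt n)
    ∧ (fun n => (ℙ {ω | n < fpt n (psum (exRow X Y n)) (fun _ => 0) ω}).toReal)
        =o[atTop] (fun n =>
          ∫ ω in {ω | n < fpt n (psum (exRow X Y n)) (fun _ => 0) ω},
            psum (exRow X Y n) n ω) := by
  have hM : 1 ≤ M := one_le_of_integral_sq_eq_one (hbdd 2 le_rfl) (hvar 2 le_rfl)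
  have hN : ∀ n, 2 ≤ n → 1 ≤ Nn n := fun n hn => by
    have : (1 : ℝ) ≤ n - 1 := by linarith [show (2 : ℝ) ≤ n by exact_mod_cast hn]
    nlinarith [hNM n hn]
  have hXint : ∀ k, 2 ≤ k → Integrable (X k) ℙ := fun k hk =>
    .of_bound (hmeas k).aestronglyMeasurable M (hbdd k hk)
  have hindXY : ∀ n k, IndepFun (X k) (Y n) ℙ := fun n k =>
    hind.indepFun (i := .inl k) (j := .inr n) Sum.inl_ne_inr
  have hevent : ∀ n, 2 ≤ n → {ω | n < fpt n (psum (exRow X Y n)) (fun _ => 0) ω} =ᵐ[ℙ]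
      {ω | Y n ω = Nn n} := fun n hn =>
    fpt_exRow_event_ae_eq (by omega) (by linarith) (hNM n hn) hbdd
      (ae_eq_or_eq_neg_or_eq_zero_of_threePoint (hmeasY n) (hN n hn) (hYlaw n hn))
  have hEn : ∀ n, 2 ≤ n → (∫ ω in {ω | n < fpt n (psum (exRow X Y n)) (fun _ => 0) ω},
      psum (exRow X Y n) n ω) = (ℙ {ω | Y n ω = Nn n}).toReal * Nn n / Real.sqrt n :=
    fun n hn => (setIntegral_congr_set (hevent n hn)).trans
      (setIntegral_psum_exRow (by omega) (hmeasY n) hXint (fun k _ => hindXY n k) hmean)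
  refine ⟨fun ε hε => tendsto_lindebergSum_exRow hε hbdd hvarY, hevent, hEn, ?_⟩
  refine Asymptotics.isLittleO_iff_exists_eq_mul.2
    ⟨_, tendsto_sqrt_div_of_mul_lt hM hNM, ?_⟩
  filter_upwards [eventually_ge_atTop 2] with n hn
  have hsqrt : 0 < Real.sqrt n := Real.sqrt_pos.2 (by positivity)
  have hNpos : 0 < Nn n := by linarith [hN n hn]
  rw [Pi.mul_apply, hEn n hn, measure_congr (hevent n hn)]
  field_simp

/-- Example 1: the array `X_{1,n} = Y_n/√n`, `X_{k,n} = X_k/√n`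
(with `Y_n` a symmetric three-point variable on `{-N_n, 0, N_n}` and `N_n > (n-1)M`)
satisfies the Lindeberg condition, `{T_n > n} = {Y_n = N_n}`,
`E_n = P(Y_n = N_n) N_n / √n`, and `P(T_n > n) = o(E_n)`. -/
theorem stmt_7 {Ω : Type*} [MeasureSpace Ω] [IsProbabilityMeasure (ℙ : Measure Ω)]
    (X Y : ℕ → Ω → ℝ) (M : ℝ) (Nn : ℕ → ℝ)
    (hmeas : ∀ k, Measurable (X k)) (hmeasY : ∀ k, Measurable (Y k))
    (hind : iIndepFun (Sum.elim X Y) ℙ)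
    (hmean : ∀ k, 2 ≤ k → ∫ ω, X k ω = 0)
    (hvar : ∀ k, 2 ≤ k → ∫ ω, (X k ω) ^ 2 = 1)
    (hbdd : ∀ k, 2 ≤ k → ∀ᵐ ω ∂ℙ, |X k ω| ≤ M)
    (hmeanY : ∀ n, 2 ≤ n → ∫ ω, Y n ω = 0)
    (hvarY : ∀ n, 2 ≤ n → ∫ ω, (Y n ω) ^ 2 = 1)
    (hN : ∀ n, 1 ≤ Nn n)
    (hYlaw : ∀ n, 2 ≤ n →
      ℙ {ω | Y n ω = Nn n} = ENNReal.ofReal (1 / (2 * (Nn n) ^ 2)) ∧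
      ℙ {ω | Y n ω = -Nn n} = ENNReal.ofReal (1 / (2 * (Nn n) ^ 2)) ∧
      ℙ {ω | Y n ω = 0} = ENNReal.ofReal (1 - 1 / (Nn n) ^ 2))
    (hNM : ∀ n : ℕ, 2 ≤ n → ((n : ℝ) - 1) * M < Nn n) :
    (∀ ε : ℝ, 0 < ε →
      Tendsto (fun n => ∑ i ∈ Finset.Icc 1 n,
          ∫ ω in {ω | ε < |exRow X Y n i ω|}, (exRow X Y n i ω) ^ 2)
        atTop (nhds 0))
    ∧ (∀ n, 2 ≤ n →
        {ω | n < fpt n (psum (exRow X Y n)) (fun _ => 0) ω} =ᵐ[ℙ]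
          {ω | Y n ω = Nn n})
    ∧ (∀ n, 2 ≤ n →
        (∫ ω in {ω | n < fpt n (psum (exRow X Y n)) (fun _ => 0) ω},
            psum (exRow X Y n) n ω)
          = (ℙ {ω | Y n ω = Nn n}).toReal * Nn n / Real.sqrt n)
    ∧ (fun n => (ℙ {ω | n < fpt n (psum (exRow X Y n)) (fun _ => 0) ω}).toReal)
        =o[atTop] (fun n =>
          ∫ ω in {ω | n < fpt n (psum (exRow X Y n)) (fun _ => 0) ω},
            psum (exRow X Y n) n ω) :=
  stmt_7_general X Y M Nn hmeas hmeasY hind hmean hvar hbdd hvarY hYlaw hNM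
end
end

section
/- Fix n and let X_1,...,X_n be independent with E[X_i] = 0 and finite variances, let g_1,...,g_n be reals with g_n* = max_k|g_k|, S_k = X_1+...+X_k, Z_k := S_k − g_k, T := inf{k ≥ 1 : S_k ≤ g_k}, Ẑ_k := Z_k·1{T > k}. Let α be a stopping time (with respect to the natural filtration of the X_i) with 1 ≤ α ≤ l ≤ n almost surely, and set p(α,l) := P(α < T, α < l). Then E[Ẑ_α] − E[Ẑ_l] ≤ 2 g_n* p(α,l). -/
open MeasureTheory ProbabilityTheory Filter

noncomputable section

/-- `Ẑ_k = (S_k - g_k) 1{T > k}`. -/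
def zhat {Ω : Type*} (n : ℕ) (X : ℕ → Ω → ℝ) (g : ℕ → ℝ) (k : ℕ) (ω : Ω) : ℝ :=
  if k < fpt n (psum X) g ω then psum X k ω - g k else 0

/-! Stopped at time `n`, the partial sums `S` form a martingale for the natural filtration, so
optional stopping gives `E[S (α ∧ T)] = E[S (T ∧ l)]`. Pointwise,
`Ẑ_α - Ẑ_l ≤ S (α ∧ T) - S (T ∧ l) + 2 g* 1{α < T, α < l}`: off that event both sides vanish, and
on it the only boundary terms left are `-g_α` and either `g_l` (if `T > l`) or `S_T ≤ g_T`
(if `T ≤ l`). Integrating gives the bound. -/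

theorem Finset.le_ciSup₂_of_mem {ι α : Type*} [ConditionallyCompleteLattice α] {s : Finset ι}
    (f : ι → α) {k : ι} (hk : k ∈ s) : f k ≤ ⨆ i ∈ s, f i :=
  le_ciSup₂ (f := fun i (_ : i ∈ s) => f i)
    ((s.finite_toSet.image f).bddAbove.mono (by
      simp only [Set.iUnion_subset_iff, Set.range_subset_iff]
      exact fun i hi => ⟨i, hi, rfl⟩)) k hk

section FirstPassage

variable {Ω : Type*} {n : ℕ} {S : ℕ → Ω → ℝ} {g : ℕ → ℝ} {ω : Ω}

lemma fpt_mem (n : ℕ) (S : ℕ → Ω → ℝ) (g : ℕ → ℝ) (ω : Ω) :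
    fpt n S g ω ∈ ({k | 1 ≤ k ∧ k ≤ n ∧ S k ω ≤ g k} ∪ {n + 1} : Set ℕ) :=
  Nat.sInf_mem ⟨n + 1, Or.inr rfl⟩

lemma one_le_fpt : 1 ≤ fpt n S g ω := by
  rcases fpt_mem n S g ω with h | h
  · exact h.1
  · rw [h]; omega

lemma fpt_le_succ : fpt n S g ω ≤ n + 1 :=
  Nat.sInf_le (Or.inr rfl)

lemma apply_fpt_le (hT : fpt n S g ω ≤ n) : S (fpt n S g ω) ω ≤ g (fpt n S g ω) := by
  rcases fpt_mem n S g ω with h | h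
  · exact h.2.2
  · rw [h] at hT; omega

lemma fpt_le_iff {i : ℕ} :
    fpt n S g ω ≤ i ↔ n < i ∨ ∃ j ∈ Finset.Icc 1 i, S j ω ≤ g j := by
  constructor
  · intro hi
    rcases fpt_mem n S g ω with h | h
    · exact Or.inr ⟨_, Finset.mem_Icc.2 ⟨h.1, hi⟩, h.2.2⟩
    · rw [h] at hi; omega
  · rintro (hi | ⟨j, hj, hSj⟩)
    · exact fpt_le_succ.trans hi
    · rw [Finset.mem_Icc] at hj
      by_cases hjn : j ≤ n
      · exact (Nat.sInf_le (Or.inl ⟨hj.1, hjn, hSj⟩)).trans hj.2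
      · exact fpt_le_succ.trans (by omega)

lemma isStoppingTime_fpt [MeasurableSpace Ω] {ℱ : Filtration ℕ ‹_›} (hS : StronglyAdapted ℱ S) :
    IsStoppingTime ℱ (fun ω => (fpt n S g ω : WithTop ℕ)) := by
  intro i
  have hset : {ω | (fpt n S g ω : WithTop ℕ) ≤ i}
      = {_ω | n < i} ∪ ⋃ j ∈ Finset.Icc 1 i, {ω | S j ω ≤ g j} := by
    ext ω
    simp [fpt_le_iff]
  show MeasurableSet[ℱ i] {ω | (fpt n S g ω : WithTop ℕ) ≤ i}
  rw [hset]
  refine (MeasurableSet.const _).union (Finset.measurableSet_biUnion _ fun j hj => ?_)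
  exact measurableSet_le (((hS j).mono (ℱ.mono (Finset.mem_Icc.1 hj).2)).measurable)
    measurable_const

end FirstPassage

section StoppingTimes

variable {Ω : Type*} {m : MeasurableSpace Ω} {μ : Measure Ω} {𝒢 : Filtration ℕ m}

lemma isStoppingTime_natCast_min {α β : Ω → ℕ} (hα : IsStoppingTime 𝒢 fun ω => (α ω : WithTop ℕ))
    (hβ : IsStoppingTime 𝒢 fun ω => (β ω : WithTop ℕ)) :
    IsStoppingTime 𝒢 fun ω => ((min (α ω) (β ω) : ℕ) : WithTop ℕ) := by
  intro i
  have hset : {ω | ((min (α ω) (β ω) : ℕ) : WithTop ℕ) ≤ i}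
      = {ω | (α ω : WithTop ℕ) ≤ i} ∪ {ω | (β ω : WithTop ℕ) ≤ i} := by
    ext ω
    simp
  show MeasurableSet[𝒢 i] {ω | ((min (α ω) (β ω) : ℕ) : WithTop ℕ) ≤ i}
  rw [hset]
  exact (hα i).union (hβ i)

theorem MeasureTheory.Martingale.integral_comp_eq_of_le [SigmaFiniteFiltration μ 𝒢] {f : ℕ → Ω → ℝ}
    (hf : Martingale f 𝒢 μ) {σ τ : Ω → ℕ} (hσ : IsStoppingTime 𝒢 fun ω => (σ ω : WithTop ℕ))
    (hτ : IsStoppingTime 𝒢 fun ω => (τ ω : WithTop ℕ)) (hστ : ∀ ω, σ ω ≤ τ ω) {N : ℕ}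
    (hτN : ∀ ω, τ ω ≤ N) :
    ∫ ω, f (σ ω) ω ∂μ = ∫ ω, f (τ ω) ω ∂μ := by
  have hle : (fun ω => (σ ω : WithTop ℕ)) ≤ fun ω => (τ ω : WithTop ℕ) := fun ω =>
    WithTop.coe_le_coe.2 (hστ ω)
  have hbdd : ∀ ω, (τ ω : WithTop ℕ) ≤ N := fun ω => WithTop.coe_le_coe.2 (hτN ω)
  refine le_antisymm (hf.submartingale.expected_stoppedValue_mono hσ hτ hle hbdd) ?_
  have := hf.neg.submartingale.expected_stoppedValue_mono hσ hτ hle hbdd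
  simp only [stoppedValue, Pi.neg_apply, integral_neg, neg_le_neg_iff] at this
  exact this

lemma integrable_comp_of_isStoppingTime {E : Type*} [NormedAddCommGroup E] {u : ℕ → Ω → E}
    {α : Ω → ℕ} (hα : IsStoppingTime 𝒢 fun ω => (α ω : WithTop ℕ)) {N : ℕ}
    (hu : ∀ k ≤ N, Integrable (u k) μ) (hαN : ∀ᵐ ω ∂μ, α ω ≤ N) :
    Integrable (fun ω => u (α ω) ω) μ := by
  refine (integrable_stoppedValue ℕ (isStoppingTime_natCast_min hα (isStoppingTime_const 𝒢 N))
    (u := fun k => u (min k N)) (fun k => hu _ (min_le_right _ _))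
    (fun _ => WithTop.coe_le_coe.2 (min_le_right _ _))).congr ?_
  filter_upwards [hαN] with ω hω
  show u (min (min (α ω) N) N) ω = u (α ω) ω
  rw [min_eq_left hω, min_eq_left hω]

end StoppingTimes

section PartialSums

variable {Ω : Type*} {m : MeasurableSpace Ω} {μ : Measure Ω} {n : ℕ} {X : ℕ → Ω → ℝ}

lemma psum_succ (X : ℕ → Ω → ℝ) (k : ℕ) : psum X (k + 1) = psum X k + X (k + 1) := by
  funext ω
  exact Finset.sum_Icc_succ_top (by omega) _

lemma integrable_psum (hint : ∀ i ∈ Finset.Icc 1 n, Integrable (X i) μ) {k : ℕ} (hk : k ≤ n) :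
    Integrable (psum X k) μ :=
  integrable_finsetSum _ fun i hi =>
    hint i (Finset.mem_Icc.2 ⟨(Finset.mem_Icc.1 hi).1, (Finset.mem_Icc.1 hi).2.trans hk⟩)

lemma stronglyAdapted_psum (hsm : ∀ i, StronglyMeasurable (X i)) :
    StronglyAdapted (Filtration.natural X hsm) (psum X) := fun _ =>
  Finset.stronglyMeasurable_fun_sum _ fun i hi =>
    (Filtration.stronglyAdapted_natural hsm i).mono
      ((Filtration.natural X hsm).mono (Finset.mem_Icc.1 hi).2)

lemma indep_comap_natural_of_lt (hsm : ∀ i, StronglyMeasurable (X i)) (hX0 : ∀ ω, X 0 ω = 0)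
    (hind : iIndepFun (fun i : {i // i ∈ Finset.Icc 1 n} => X i) μ)
    {i k : ℕ} (hi : i ∈ Finset.Icc 1 n) (hki : k < i) :
    Indep (MeasurableSpace.comap (X i) inferInstance) (Filtration.natural X hsm k) μ := by
  have hindep := indep_iSup_of_disjoint
    (fun j : {i // i ∈ Finset.Icc 1 n} => (hsm j.1).measurable.comap_le)
    ((iIndepFun_iff_iIndep _ _ μ).1 hind)
    (S := {⟨i, hi⟩}) (T := {j | j.1 ≤ k}) (by
      rw [Set.disjoint_singleton_left]
      exact hki.not_ge)
  refine indep_of_indep_of_le_right (indep_of_indep_of_le_left hindep ?_) ?_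
  · rw [iSup_singleton]
  · refine iSup₂_le fun j hjk => ?_
    rcases Nat.eq_zero_or_pos j with rfl | hj
    · rw [show X 0 = fun _ => 0 from funext hX0, MeasurableSpace.comap_const]
      exact bot_le
    · exact le_iSup₂_of_le (f := fun j (_ : j ∈ {j : {i // i ∈ Finset.Icc 1 n} | j.1 ≤ k}) => _)
        ⟨j, Finset.mem_Icc.2 ⟨hj, by have := (Finset.mem_Icc.1 hi).2; omega⟩⟩ hjk le_rfl

lemma martingale_psum_min [IsProbabilityMeasure μ] (hsm : ∀ i, StronglyMeasurable (X i))
    (hX0 : ∀ ω, X 0 ω = 0) (hind : iIndepFun (fun i : {i // i ∈ Finset.Icc 1 n} => X i) μ)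
    (hmean : ∀ i ∈ Finset.Icc 1 n, ∫ ω, X i ω ∂μ = 0)
    (hint : ∀ i ∈ Finset.Icc 1 n, Integrable (X i) μ) :
    Martingale (fun k => psum X (min k n)) (Filtration.natural X hsm) μ := by
  refine martingale_of_condExp_sub_eq_zero_nat
    (fun k => (stronglyAdapted_psum hsm _).mono ((Filtration.natural X hsm).mono (min_le_left _ _)))
    (fun k => integrable_psum hint (min_le_right _ _)) fun k => ?_
  by_cases hk : k < n
  · have hi : k + 1 ∈ Finset.Icc 1 n := Finset.mem_Icc.2 ⟨by omega, hk⟩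
    rw [min_eq_left hk.le, min_eq_left hk, psum_succ, add_sub_cancel_left]
    refine (condExp_indep_eq (hsm _).measurable.comap_le ((Filtration.natural X hsm).le k)
      (measurable_iff_comap_le.2 le_rfl).stronglyMeasurable
      (indep_comap_natural_of_lt hsm hX0 hind hi (Nat.lt_succ_self k))).trans ?_
    simp only [hmean _ hi]
    rfl
  · rw [min_eq_right (by omega), min_eq_right (by omega), sub_self, condExp_zero]

lemma integral_psum_comp_eq_of_le [IsProbabilityMeasure μ] (hsm : ∀ i, StronglyMeasurable (X i))
    (hX0 : ∀ ω, X 0 ω = 0) (hind : iIndepFun (fun i : {i // i ∈ Finset.Icc 1 n} => X i) μ)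
    (hmean : ∀ i ∈ Finset.Icc 1 n, ∫ ω, X i ω ∂μ = 0)
    (hint : ∀ i ∈ Finset.Icc 1 n, Integrable (X i) μ) {σ τ : Ω → ℕ}
    (hσ : IsStoppingTime (Filtration.natural X hsm) fun ω => (σ ω : WithTop ℕ))
    (hτ : IsStoppingTime (Filtration.natural X hsm) fun ω => (τ ω : WithTop ℕ))
    (hστ : ∀ ω, σ ω ≤ τ ω) (hτn : ∀ ω, τ ω ≤ n) :
    ∫ ω, psum X (σ ω) ω ∂μ = ∫ ω, psum X (τ ω) ω ∂μ := by
  have h := (martingale_psum_min hsm hX0 hind hmean hint).integral_comp_eq_of_le hσ hτ hστ hτn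
  simpa only [fun ω => min_eq_left ((hστ ω).trans (hτn ω)), fun ω => min_eq_left (hτn ω)] using h

end PartialSums

section Zhat

variable {Ω : Type*} {n : ℕ} {X : ℕ → Ω → ℝ} {g : ℕ → ℝ}

lemma zhat_eq_indicator (k : ℕ) :
    zhat n X g k = {ω | k < fpt n (psum X) g ω}.indicator fun ω => psum X k ω - g k := by
  funext ω
  simp only [zhat, Set.indicator_apply, Set.mem_ofPred_eq]

lemma integrable_zhat [MeasurableSpace Ω] {μ : Measure Ω} [IsFiniteMeasure μ]
    (hint : ∀ i ∈ Finset.Icc 1 n, Integrable (X i) μ) (hT : Measurable (fpt n (psum X) g))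
    {k : ℕ} (hk : k ≤ n) : Integrable (zhat n X g k) μ := by
  rw [zhat_eq_indicator]
  exact ((integrable_psum hint hk).sub (integrable_const (g k))).indicator
    (measurableSet_lt measurable_const hT)

lemma integrable_zhat_comp [MeasurableSpace Ω] {μ : Measure Ω} [IsFiniteMeasure μ]
    (hsm : ∀ i, StronglyMeasurable (X i)) (hint : ∀ i ∈ Finset.Icc 1 n, Integrable (X i) μ)
    {α : Ω → ℕ} (hα : IsStoppingTime (Filtration.natural X hsm) fun ω => (α ω : WithTop ℕ))
    (hαn : ∀ᵐ ω ∂μ, α ω ≤ n) :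
    Integrable (fun ω => zhat n X g (α ω) ω) μ :=
  integrable_comp_of_isStoppingTime hα (fun _ hk => integrable_zhat hint
    (isStoppingTime_fpt (stronglyAdapted_psum hsm)).measurable'.untopA hk) hαn

lemma zhat_sub_zhat_le {G : ℝ} (hG : ∀ k ∈ Finset.Icc 1 n, |g k| ≤ G) {a l : ℕ} (ha : 1 ≤ a)
    (hal : a ≤ l) (hl : l ≤ n) (ω : Ω) :
    zhat n X g a ω - zhat n X g l ω
      ≤ psum X (min a (fpt n (psum X) g ω)) ω - psum X (min (fpt n (psum X) g ω) l) ω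
        + if a < fpt n (psum X) g ω ∧ a < l then 2 * G else 0 := by
  set T := fpt n (psum X) g ω with hT
  have hgG : ∀ k, 1 ≤ k → k ≤ n → -G ≤ g k ∧ g k ≤ G := fun k hk1 hkn =>
    abs_le.1 (hG k (Finset.mem_Icc.2 ⟨hk1, hkn⟩))
  simp only [zhat, ← hT]
  by_cases haT : a < T
  · by_cases hal' : a < l
    · rw [if_pos haT, if_pos (show a < T ∧ a < l from ⟨haT, hal'⟩), min_eq_left haT.le]
      by_cases hlT : l < T
      · rw [if_pos hlT, min_eq_right hlT.le]
        linarith [hgG a ha (hal.trans hl), hgG l (ha.trans hal) hl]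
      · have hTn : T ≤ n := by omega
        rw [if_neg hlT, min_eq_left (not_lt.1 hlT)]
        linarith [hgG a ha (hal.trans hl), hgG T one_le_fpt hTn, apply_fpt_le hTn]
    · obtain rfl : a = l := by omega
      rw [if_neg (show ¬(a < T ∧ a < a) from fun h => hal' h.2), min_comm]
      simp
  · rw [if_neg haT, if_neg (show ¬l < T by omega),
      if_neg (show ¬(a < T ∧ a < l) from fun h => haT h.1), min_eq_right (by omega),
      min_eq_left (by omega)]
    simp

end Zhat

/-- Lemma 3, upper bound: for independent centered square-integrable
random variables (`X 0 = 0` by convention), a boundary `g`, and a stopping time `α` of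
the natural filtration with `1 ≤ α ≤ l ≤ n` a.s.,
`E[Ẑ_α] - E[Ẑ_l] ≤ 2 g* · P(α < T, α < l)`. -/
theorem stmt_13 {Ω : Type*} [MeasureSpace Ω] [IsProbabilityMeasure (ℙ : Measure Ω)]
    (n l : ℕ) (X : ℕ → Ω → ℝ) (g : ℕ → ℝ) (α : Ω → ℕ)
    (hsm : ∀ i, StronglyMeasurable (X i))
    (hX0 : ∀ ω, X 0 ω = 0)
    (hind : iIndepFun
      (fun i : {i // i ∈ Finset.Icc 1 n} => X i) ℙ)
    (hmean : ∀ i ∈ Finset.Icc 1 n, ∫ ω, X i ω = 0)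
    (hL2 : ∀ i ∈ Finset.Icc 1 n, MemLp (X i) 2 ℙ)
    (hl : l ≤ n)
    (hα : IsStoppingTime (MeasureTheory.Filtration.natural X hsm) (fun ω => (α ω : WithTop ℕ)))
    (hαl : ∀ᵐ ω ∂ℙ, 1 ≤ α ω ∧ α ω ≤ l) :
    (∫ ω, zhat n X g (α ω) ω) - ∫ ω, zhat n X g l ω
      ≤ 2 * (⨆ k ∈ Finset.Icc 1 n, |g k|)
          * (ℙ {ω | α ω < fpt n (psum X) g ω ∧ α ω < l}).toReal := by
  set F := Filtration.natural X hsm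
  set T := fpt n (psum X) g
  set G := ⨆ k ∈ Finset.Icc 1 n, |g k|
  set A := {ω | α ω < T ω ∧ α ω < l}
  -- `α` is capped at `l` so that `σ ≤ τ` holds everywhere, as optional stopping requires
  set σ := fun ω => min (min (α ω) l) (T ω)
  set τ := fun ω => min (T ω) l
  have hint : ∀ i ∈ Finset.Icc 1 n, Integrable (X i) := fun i hi =>
    (hL2 i hi).integrable one_le_two
  have hT : IsStoppingTime F fun ω => (T ω : WithTop ℕ) :=
    isStoppingTime_fpt (stronglyAdapted_psum hsm)
  have hσ :=
    isStoppingTime_natCast_min (isStoppingTime_natCast_min hα (isStoppingTime_const F l)) hT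
  have hτ := isStoppingTime_natCast_min hT (isStoppingTime_const F l)
  have hστ : ∀ ω, σ ω ≤ τ ω := fun ω => by simp only [σ, τ]; omega
  have hτn : ∀ ω, τ ω ≤ n := fun _ => (min_le_right _ _).trans hl
  have hσi : Integrable fun ω => psum X (σ ω) ω := integrable_comp_of_isStoppingTime hσ
    (fun _ hk => integrable_psum hint hk) (ae_of_all _ fun ω => (hστ ω).trans (hτn ω))
  have hτi : Integrable fun ω => psum X (τ ω) ω := integrable_comp_of_isStoppingTime hτ
    (fun _ hk => integrable_psum hint hk) (ae_of_all _ hτn)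
  have hA : MeasurableSet A :=
    (measurableSet_lt hα.measurable'.untopA hT.measurable'.untopA).inter
      (measurableSet_lt hα.measurable'.untopA measurable_const)
  have hzα := integrable_zhat_comp (g := g) hsm hint hα (hαl.mono fun _ h => h.2.trans hl)
  have hzl := integrable_zhat_comp (g := g) hsm hint (isStoppingTime_const F l)
    (ae_of_all _ fun _ => hl)
  have hpt : ∀ᵐ ω ∂ℙ, zhat n X g (α ω) ω - zhat n X g l ω
      ≤ psum X (σ ω) ω - psum X (τ ω) ω + A.indicator (fun _ => 2 * G) ω := by
    filter_upwards [hαl] with ω ⟨h1, h2⟩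
    simp only [σ, min_eq_left h2, Set.indicator_apply, A, Set.mem_ofPred_eq]
    exact zhat_sub_zhat_le (fun k hk => Finset.le_ciSup₂_of_mem (fun k => |g k|) hk) h1 h2 hl ω
  calc (∫ ω, zhat n X g (α ω) ω) - ∫ ω, zhat n X g l ω
      = ∫ ω, (zhat n X g (α ω) ω - zhat n X g l ω) := (integral_sub hzα hzl).symm
    _ ≤ ∫ ω, (psum X (σ ω) ω - psum X (τ ω) ω + A.indicator (fun _ => 2 * G) ω) :=
      integral_mono_ae (hzα.sub hzl) ((hσi.sub hτi).add ((integrable_const _).indicator hA)) hpt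
    _ = 2 * G * (ℙ A).toReal := by
      rw [integral_add (by exact hσi.sub hτi) ((integrable_const _).indicator hA),
        integral_sub hσi hτi, integral_psum_comp_eq_of_le hsm hX0 hind hmean hint hσ hτ hστ hτn,
        sub_self, zero_add, integral_indicator_const _ hA, smul_eq_mul, measureReal_def, mul_comm]
end
end

section
/- Let U_m := X_2 + ... + X_m be a simple symmetric random walk (X_k i.i.d. with P(X_k = ±1) = 1/2) and let underline-U_m := min_{2≤i≤m} U_i. Then for all integers m, N ≥ 1: P(N + underline-U_m > 0) = P(−N < U_m ≤ N). -/
open MeasureTheory ProbabilityTheory Filter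

noncomputable section

/-- The walk `U_m = X_2 + … + X_m`. -/
def rwU {Ω : Type*} (X : ℕ → Ω → ℝ) (m : ℕ) (ω : Ω) : ℝ :=
  ∑ i ∈ Finset.Icc 2 m, X i ω

/-- The running minimum `min_{2 ≤ i ≤ m} U_i` (with the convention that the empty
minimum, for `m = 1`, equals `0`). -/
def rwUmin {Ω : Type*} (X : ℕ → Ω → ℝ) (m : ℕ) (ω : Ω) : ℝ :=
  sInf ((fun i => rwU X i ω) '' Set.Icc 2 m)

/-!
Both events depend only on the signs `X_2, …, X_m`, each of the `2^(m-1)` sign patterns having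
probability `2^{-(m-1)}`, so the identity is one between numbers of `±1` paths of length
`n = m - 1`. Write `A(n, N)` for the number of paths whose partial sums all stay above `-N` and
`E(n, a, b)` for the number whose endpoint lies in `(a, b]`. Splitting on the first step gives
`A(n+1, N) = A(n, N-1) + A(n, N+1)` (with `A(n, 0) = 0`) and
`E(n+1, a, b) = E(n, a-1, b-1) + E(n, a+1, b+1)`, and `A(n, N) = E(n, -N, N)` follows by
induction on `n`, since additivity of `E` in the interval gives
`E(n, -N-1, N-1) + E(n, -N+1, N+1) = E(n, -N-1, N+1) + E(n, -N+1, N-1)`.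
-/

open Finset Fintype

lemma Fin.partialSum_last {M : Type*} [AddCommMonoid M] {n : ℕ} (f : Fin n → M) :
    Fin.partialSum f (Fin.last n) = ∑ i, f i := by
  rw [Fin.partialSum, Fin.val_last, List.take_of_length_le (List.length_ofFn).le, List.sum_ofFn]

def signVectors (ι R : Type*) [Fintype ι] [DecidableEq ι] [Ring R] [DecidableEq R] :
    Finset (ι → R) :=
  piFinset fun _ => {1, -1}

section SignVectors

variable {R : Type*} [CommRing R] [LinearOrder R]

lemma card_filter_signVectors_succ [IsStrictOrderedRing R] {n : ℕ}
    (P : (Fin (n + 1) → R) → Prop) [DecidablePred P] :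
    #{v ∈ signVectors (Fin (n + 1)) R | P v}
      = #{t ∈ signVectors (Fin n) R | P (Fin.cons 1 t)}
        + #{t ∈ signVectors (Fin n) R | P (Fin.cons (-1) t)} := by
  have hsplit := filter_piFinset_eq_map_consEquiv (fun _ : Fin (n + 1) => ({1, -1} : Finset R))
    (fun _ => True)
  simp only [filter_true] at hsplit
  rw [signVectors, hsplit, filter_map, card_map, card_filter, sum_product,
    sum_pair (neg_lt_self one_pos).ne', card_filter, card_filter]
  rfl

lemma forall_lt_partialSum_cons [IsStrictOrderedRing R] {n : ℕ} {c a : R} {t : Fin n → R} :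
    (∀ k, c < Fin.partialSum (Fin.cons a t : Fin (n + 1) → R) k)
      ↔ c < 0 ∧ ∀ k, c - a < Fin.partialSum t k := by
  simp only [Fin.forall_fin_succ, Fin.partialSum_zero, Fin.partialSum_succ', Fin.cons_zero,
    Fin.tail_cons, sub_lt_iff_lt_add']

variable (R) in
def countAbove (n : ℕ) (c : R) : ℕ :=
  #{v ∈ signVectors (Fin n) R | ∀ k, c < Fin.partialSum v k}

variable (R) in
def countBetween (n : ℕ) (a b : R) : ℕ :=
  #{v ∈ signVectors (Fin n) R | a < ∑ i, v i ∧ ∑ i, v i ≤ b}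

lemma countAbove_of_nonneg {n : ℕ} {c : R} (hc : 0 ≤ c) : countAbove R n c = 0 := by
  refine card_eq_zero.2 (filter_eq_empty_iff.2 fun v _ hv => ?_)
  have := hv 0
  rw [Fin.partialSum_zero] at this
  exact hc.not_gt this

lemma countAbove_succ [IsStrictOrderedRing R] {n : ℕ} {c : R} (hc : c < 0) :
    countAbove R (n + 1) c = countAbove R n (c - 1) + countAbove R n (c + 1) := by
  simp only [countAbove, card_filter_signVectors_succ, forall_lt_partialSum_cons, hc, true_and,
    sub_neg_eq_add]

lemma countBetween_succ [IsStrictOrderedRing R] {n : ℕ} {a b : R} :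
    countBetween R (n + 1) a b
      = countBetween R n (a - 1) (b - 1) + countBetween R n (a + 1) (b + 1) := by
  simp only [countBetween, card_filter_signVectors_succ, Fin.sum_cons, ← sub_lt_iff_lt_add',
    ← le_sub_iff_add_le', sub_neg_eq_add]

lemma countBetween_add {n : ℕ} {a b c : R} (hab : a ≤ b) (hbc : b ≤ c) :
    countBetween R n a b + countBetween R n b c = countBetween R n a c := by
  rw [countBetween, countBetween, countBetween, ← card_union_of_disjoint, ← filter_or]
  · congr 1
    refine filter_congr fun v _ => ?_
    constructor
    · rintro (h | h)
      exacts [⟨h.1, h.2.trans hbc⟩, ⟨hab.trans_lt h.1, h.2⟩]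
    · intro h
      rcases le_or_gt (∑ i, v i) b with hb | hb
      exacts [Or.inl ⟨h.1, hb⟩, Or.inr ⟨hb, h.2⟩]
  · exact disjoint_filter.2 fun v _ h1 h2 => h1.2.not_gt h2.1

lemma countBetween_self {n : ℕ} (a : R) : countBetween R n a a = 0 :=
  card_eq_zero.2 (filter_eq_empty_iff.2 fun _ _ h => h.1.not_ge h.2)

theorem countAbove_eq_countBetween [IsStrictOrderedRing R] (n N : ℕ) :
    countAbove R n (-N) = countBetween R n (-N) N := by
  rcases N with _ | M
  · rw [Nat.cast_zero, neg_zero, countAbove_of_nonneg le_rfl, countBetween_self]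
  induction n generalizing M with
  | zero =>
    have hM : (-(M + 1 : ℕ) : R) < 0 := by push_cast; linarith [(M.cast_nonneg : (0 : R) ≤ M)]
    rw [countAbove, countBetween, filter_true_of_mem, filter_true_of_mem]
    · exact fun v _ => by rw [Fin.sum_univ_zero]; exact ⟨hM, by linarith⟩
    · exact fun v _ k => by rwa [Fin.fin_one_eq_zero k, Fin.partialSum_zero]
  | succ n ih =>
    set x : R := (M : R)
    have hx : 0 ≤ x := M.cast_nonneg
    have ih₂ : countAbove R n (-x - 2) = countBetween R n (-x - 2) (x + 2) := by
      convert ih (M + 1) using 2 <;> push_cast <;> ring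
    have ih₀ : countAbove R n (-x) = countBetween R n (-x) x := by
      rcases M with _ | M
      · simp only [x, Nat.cast_zero, neg_zero, countAbove_of_nonneg le_rfl, countBetween_self]
      · exact ih M
    push_cast
    rw [countAbove_succ (by linarith), countBetween_succ,
      show -(x + 1) - 1 = -x - 2 by ring, show -(x + 1) + 1 = -x by ring,
      show x + 1 - 1 = x by ring, show x + 1 + 1 = x + 2 by ring, ih₂, ih₀,
      ← countBetween_add (by linarith : -x - 2 ≤ -x) (by linarith : -x ≤ x),
      ← countBetween_add (by linarith : -x - 2 ≤ -x) (by linarith : -x ≤ x + 2),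
      ← countBetween_add (by linarith : -x ≤ x) (by linarith : x ≤ x + 2)]
    omega

end SignVectors

section Rademacher

variable {Ω ι : Type*} [MeasurableSpace Ω] [Fintype ι] [DecidableEq ι] {μ : Measure Ω}
  {Y : ι → Ω → ℝ}

lemma measure_preimage_singleton_of_mem_signVectors (hind : iIndepFun Y μ)
    (hrad : ∀ i, μ {ω | Y i ω = 1} = ENNReal.ofReal (1 / 2) ∧
      μ {ω | Y i ω = -1} = ENNReal.ofReal (1 / 2))
    {v : ι → ℝ} (hv : v ∈ signVectors ι ℝ) :
    μ ((fun ω i => Y i ω) ⁻¹' {v}) = ENNReal.ofReal (1 / 2) ^ card ι := by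
  have hset : (fun ω i => Y i ω) ⁻¹' {v} = ⋂ i ∈ (univ : Finset ι), Y i ⁻¹' {v i} := by
    ext ω; simp [funext_iff]
  rw [hset, hind.measure_inter_preimage_eq_mul _ fun i _ => measurableSet_singleton (v i),
    ← card_univ, ← prod_const]
  refine prod_congr rfl fun i _ => ?_
  have hvi := mem_piFinset.1 hv i
  rw [mem_insert, mem_singleton] at hvi
  rcases hvi with h | h
  · rw [h]; exact (hrad i).1
  · rw [h]; exact (hrad i).2

theorem measure_setOf_eq_card_filter_signVectors_mul [IsProbabilityMeasure μ]
    (hmeas : ∀ i, Measurable (Y i)) (hind : iIndepFun Y μ)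
    (hrad : ∀ i, μ {ω | Y i ω = 1} = ENNReal.ofReal (1 / 2) ∧
      μ {ω | Y i ω = -1} = ENNReal.ofReal (1 / 2))
    (P : (ι → ℝ) → Prop) [DecidablePred P] :
    μ {ω | P fun i => Y i ω}
      = #{v ∈ signVectors ι ℝ | P v} * ENNReal.ofReal (1 / 2) ^ card ι := by
  set Yv : Ω → ι → ℝ := fun ω i => Y i ω
  have hYv : Measurable Yv := measurable_pi_lambda _ hmeas
  have hfib : ∀ (s : Finset (ι → ℝ)), s ⊆ signVectors ι ℝ →
      μ (Yv ⁻¹' s) = #s * ENNReal.ofReal (1 / 2) ^ card ι := by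
    intro s hs
    rw [← sum_measure_preimage_singleton s fun v _ => hYv (measurableSet_singleton v),
      sum_congr rfl fun v hv => measure_preimage_singleton_of_mem_signVectors hind hrad (hs hv),
      sum_const, nsmul_eq_mul]
  -- the `2 ^ card ι` fibres over sign vectors already carry total mass `1`
  have hsupp : μ (Yv ⁻¹' (signVectors ι ℝ))ᶜ = 0 := by
    rw [prob_compl_eq_zero_iff (hYv (signVectors ι ℝ).measurableSet), hfib _ subset_rfl,
      signVectors, card_piFinset, prod_const, card_pair (by norm_num), card_univ, Nat.cast_pow,
      ← mul_pow, ENNReal.ofReal_div_of_pos two_pos, ENNReal.ofReal_one, ENNReal.ofReal_ofNat,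
      Nat.cast_ofNat, ENNReal.mul_div_cancel two_ne_zero ENNReal.ofNat_ne_top, one_pow]
  rw [← hfib _ (filter_subset _ _), ← measure_inter_conull hsupp, coe_filter, Set.inter_comm]
  rfl

end Rademacher

section Walk

variable {Ω : Type*} (X : ℕ → Ω → ℝ) (ω : Ω)

lemma rwU_succ_eq_partialSum {n : ℕ} (k : Fin (n + 1)) :
    rwU X (k + 1) ω = Fin.partialSum (fun j : Fin n => X (j + 2) ω) k := by
  induction k using Fin.induction with
  | zero => simp [rwU]
  | succ j ih =>
    rw [Fin.partialSum_succ, ← ih, Fin.val_succ, Fin.val_castSucc, rwU, rwU,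
      Finset.sum_Icc_succ_top (by omega)]

lemma lt_rwUmin_iff {m : ℕ} {c : ℝ} (hc : c < 0) :
    c < rwUmin X m ω ↔ ∀ i ∈ Set.Icc 2 m, c < rwU X i ω := by
  rcases (Set.Icc 2 m).eq_empty_or_nonempty with h | h
  · simp [rwUmin, h, hc]
  · rw [rwUmin, ((Set.finite_Icc 2 m).image _).lt_csInf_iff (h.image _), Set.forall_mem_image]

lemma lt_rwUmin_iff_forall_lt_partialSum {n : ℕ} {c : ℝ} (hc : c < 0) :
    c < rwUmin X (n + 1) ω ↔ ∀ k, c < Fin.partialSum (fun j : Fin n => X (j + 2) ω) k := by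
  rw [lt_rwUmin_iff X ω hc, Fin.forall_fin_succ, Fin.partialSum_zero]
  simp only [hc, true_and, ← rwU_succ_eq_partialSum, Fin.val_succ]
  constructor
  · exact fun h j => h _ ⟨by omega, by omega⟩
  · rintro h i ⟨hi₁, hi₂⟩
    obtain ⟨j, rfl⟩ : ∃ j, i = j + 2 := ⟨i - 2, by omega⟩
    exact h ⟨j, by omega⟩

end Walk

/-- reflection identity: for the simple symmetric random walk
`U_m = X_2 + … + X_m`, for all `m, N ≥ 1`,
`P(N + min_{2≤i≤m} U_i > 0) = P(-N < U_m ≤ N)`. -/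
theorem stmt_18 {Ω : Type*} [MeasureSpace Ω] [IsProbabilityMeasure (ℙ : Measure Ω)]
    (X : ℕ → Ω → ℝ)
    (hmeas : ∀ k, Measurable (X k))
    (hind : iIndepFun
      (fun i : {i : ℕ // 2 ≤ i} => X i) ℙ)
    (hRad : ∀ k : ℕ, 2 ≤ k →
      ℙ {ω | X k ω = 1} = ENNReal.ofReal (1 / 2) ∧
      ℙ {ω | X k ω = -1} = ENNReal.ofReal (1 / 2)) :
    ∀ m N : ℕ, 1 ≤ m → 1 ≤ N →
      ℙ {ω | 0 < (N : ℝ) + rwUmin X m ω}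
        = ℙ {ω | -(N : ℝ) < rwU X m ω ∧ rwU X m ω ≤ (N : ℝ)} := by
  intro m N hm hN
  obtain ⟨n, rfl⟩ : ∃ n, m = n + 1 := ⟨m - 1, by omega⟩
  have hN₀ : -(N : ℝ) < 0 := neg_neg_iff_pos.2 (by exact_mod_cast hN)
  have hY : iIndepFun (fun j : Fin n => X (j + 2)) ℙ :=
    hind.precomp (g := fun j : Fin n => (⟨j + 2, by omega⟩ : {i : ℕ // 2 ≤ i}))
      fun i j h => Fin.ext (by simpa using h)
  have hmeasY := fun j : Fin n => hmeas (j + 2)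
  have hradY := fun j : Fin n => hRad (j + 2) (by omega)
  have hU : ∀ ω, rwU X (n + 1) ω = ∑ j : Fin n, X (j + 2) ω := fun ω => by
    rw [← Fin.partialSum_last, ← rwU_succ_eq_partialSum, Fin.val_last]
  calc ℙ {ω | 0 < (N : ℝ) + rwUmin X (n + 1) ω}
      = ℙ {ω | ∀ k, -(N : ℝ) < Fin.partialSum (fun j : Fin n => X (j + 2) ω) k} := by
        simp only [← neg_lt_iff_pos_add', lt_rwUmin_iff_forall_lt_partialSum X _ hN₀]
    _ = countAbove ℝ n (-N) * ENNReal.ofReal (1 / 2) ^ n := by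
        rw [measure_setOf_eq_card_filter_signVectors_mul hmeasY hY hradY
          (fun v => ∀ k, -(N : ℝ) < Fin.partialSum v k), Fintype.card_fin, countAbove]
    _ = countBetween ℝ n (-N) N * ENNReal.ofReal (1 / 2) ^ n := by
        rw [countAbove_eq_countBetween]
    _ = ℙ {ω | -(N : ℝ) < rwU X (n + 1) ω ∧ rwU X (n + 1) ω ≤ N} := by
        simp only [hU]
        rw [measure_setOf_eq_card_filter_signVectors_mul hmeasY hY hradY
          (fun v => -(N : ℝ) < ∑ j, v j ∧ ∑ j, v j ≤ N), Fintype.card_fin, countBetween]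
end
end
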